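/- Fix H ∈ (0,1). For all s,t > 0 with s ≠ t, with Θ_{s,t} := s^{2H} t^{2H} − R(s,t)² and A(s,t) := (1/4)(2s^{2H} + 2t^{2H} − |t−s|^{2H} − (t^{2H} − s^{2H})²/|t−s|^{2H}), the following hold: (i) Θ_{s,t} = |t−s|^{2H} A(s,t); (ii) (s^{2H} ∧ t^{2H})/|A(s,t)| ≤ 2^{2−2H}/(4 − 2^{2H}); (iii) there is a constant C_H depending only on H such that 1/Θ²_{s,t} ≤ C_H / (|t−s|^{4H} (s^{4H} ∧ t^{4H})). -/

import Mathlib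

open Real Set

noncomputable section

/-- Fractional Brownian motion covariance `R(s,t) = (t^{2H} + s^{2H} - |t-s|^{2H})/2`. -/
def fbmR (H s t : ℝ) : ℝ := (t ^ (2*H) + s ^ (2*H) - |t - s| ^ (2*H)) / 2

/-- `Θ_{s,t} = s^{2H} t^{2H} − R(s,t)²`. -/
def fbmTheta (H s t : ℝ) : ℝ := s ^ (2*H) * t ^ (2*H) - (fbmR H s t)^2

/-- `A(s,t) = (1/4)(2s^{2H} + 2t^{2H} − |t−s|^{2H} − (t^{2H} − s^{2H})²/|t−s|^{2H})`. -/
def fbmA (H s t : ℝ) : ℝ :=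
  (2 * s ^ (2*H) + 2 * t ^ (2*H) - |t - s| ^ (2*H)
    - (t ^ (2*H) - s ^ (2*H))^2 / |t - s| ^ (2*H)) / 4

end

/-!
For `s < t` write `ν = 2H`, `a = s^ν`, `c = (t-s)^ν` and `X = t^ν - s^ν - (t-s)^ν`. Then
`Θ = a c - X² / 4`, and everything follows from the sharp bound `X² ≤ (2^ν - 2)² a c`, which gives
`Θ ≥ κ a c` with `κ = 2^ν (4 - 2^ν) / 4 > 0`.

After normalising by `(s (t-s))^{ν/2}`, that bound says that
`D(y) = ((1+y)^ν - y^ν - 1) y^{-ν/2}` lies between `0` and `D(1) = 2^ν - 2` for `y ≥ 1`. The sign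
of `D - D(1)` comes from monotonicity of `D` on `[1, ∞)`: `D'` has the sign of
`(y-1)(1+y)^{ν-1} + 1 - y^ν`, which Bernoulli's inequality and weighted AM-GM show to be `≥ 0` for
`ν ≤ 1` and `≤ 0` for `1 ≤ ν ≤ 2`. The sign of `D` itself is the subadditivity (`ν ≤ 1`) or
superadditivity (`ν ≥ 1`) of `x ↦ x^ν`.
-/

section Elementary

variable {r ν y : ℝ}

lemma one_add_rpow_le_rpow_add_mul_rpow_sub_one (hr0 : 0 ≤ r) (hr1 : r ≤ 1) (hy : 0 < y) :
    (1 + y) ^ r ≤ y ^ r + r * y ^ (r - 1) := by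
  have bernoulli : (1 + 1 / y) ^ r ≤ 1 + r * (1 / y) :=
    rpow_one_add_le_one_add_mul_self (by linarith [one_div_pos.2 hy]) hr0 hr1
  calc (1 + y) ^ r = y ^ r * (1 + 1 / y) ^ r := by
        rw [← mul_rpow hy.le (by positivity)]; congr 1; field_simp; ring
    _ ≤ y ^ r * (1 + r * (1 / y)) := by gcongr
    _ = y ^ r + r * y ^ (r - 1) := by rw [rpow_sub_one hy.ne']; ring

lemma one_add_mul_rpow_le_rpow_add_mul_rpow_sub_one (hr0 : 0 ≤ r) (hr1 : r ≤ 1) (hy : 0 < y) :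
    1 + r * y ^ r ≤ y ^ r + r * y ^ (r - 1) := by
  have amgm := geom_mean_le_arith_mean2_weighted (sub_nonneg.2 hr1) hr0
    (rpow_nonneg hy.le r) (rpow_nonneg hy.le (r - 1)) (by ring)
  have hgeom : (y ^ r) ^ (1 - r) * (y ^ (r - 1)) ^ r = 1 := by
    rw [← rpow_mul hy.le, ← rpow_mul hy.le, ← rpow_add hy]; ring_nf; exact rpow_zero y
  linarith

lemma mul_one_add_rpow_sub_one_le (hν1 : 1 ≤ ν) (hν2 : ν ≤ 2) (hy : 1 ≤ y) :
    (y - 1) * (1 + y) ^ (ν - 1) ≤ y ^ ν - 1 := by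
  have hy0 : 0 < y := by linarith
  set r := ν - 1
  have hpow : y ^ ν = y * y ^ r := by
    rw [show ν = r + 1 by ring, rpow_add_one hy0.ne', mul_comm]
  have hshift : y * y ^ (r - 1) = y ^ r := by rw [rpow_sub_one hy0.ne']; field_simp
  have amgm :=
    one_add_mul_rpow_le_rpow_add_mul_rpow_sub_one (r := r) (by linarith) (by linarith) hy0
  calc (y - 1) * (1 + y) ^ r
      ≤ (y - 1) * (y ^ r + r * y ^ (r - 1)) :=
        mul_le_mul_of_nonneg_left
          (one_add_rpow_le_rpow_add_mul_rpow_sub_one (by linarith) (by linarith) hy0) (by linarith)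
    _ = y * y ^ r + r * y ^ r - (y ^ r + r * y ^ (r - 1)) := by rw [← hshift]; ring
    _ ≤ y ^ ν - 1 := by rw [hpow]; linarith

lemma rpow_sub_one_le_mul_one_add_rpow (hν0 : 0 ≤ ν) (hν1 : ν ≤ 1) (hy : 1 ≤ y) :
    y ^ ν - 1 ≤ (y - 1) * (1 + y) ^ (ν - 1) := by
  have hy0 : 0 < y := by linarith
  set q := 1 - ν with hq
  have hpow : y ^ ν * y ^ q = y := by rw [← rpow_add hy0, hq, add_sub_cancel, rpow_one]
  have hinv : y ^ ν * y ^ (q - 1) = 1 := by rw [← rpow_add hy0, hq]; ring_nf; exact rpow_zero y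
  have hyq : 1 ≤ y ^ q := one_le_rpow hy (by linarith)
  have amgm :=
    one_add_mul_rpow_le_rpow_add_mul_rpow_sub_one (r := q) (by linarith) (by linarith) hy0
  have key : (y ^ ν - 1) * (1 + y) ^ q ≤ y - 1 :=
    calc (y ^ ν - 1) * (1 + y) ^ q
        ≤ (y ^ ν - 1) * (y ^ q + q * y ^ (q - 1)) :=
          mul_le_mul_of_nonneg_left
            (one_add_rpow_le_rpow_add_mul_rpow_sub_one (by linarith) (by linarith) hy0)
            (by linarith [one_le_rpow hy hν0])
      _ = y + q - (y ^ q + q * y ^ (q - 1)) := by linear_combination hpow + q * hinv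
      _ ≤ y - 1 := by nlinarith
  rw [show ν - 1 = -q by ring, rpow_neg (by linarith), ← div_eq_mul_inv,
    le_div_iff₀ (rpow_pos_of_pos (by linarith) q)]
  exact key

end Elementary

section Defect

variable {ν y : ℝ}

noncomputable def rpowDefect (ν y : ℝ) : ℝ := ((1 + y) ^ ν - y ^ ν - 1) * y ^ (-(ν / 2))

lemma rpowDefect_one : rpowDefect ν 1 = 2 ^ ν - 2 := by
  rw [rpowDefect, one_rpow, one_rpow, mul_one, one_add_one_eq_two]
  ring

lemma hasDerivAt_rpowDefect (ν : ℝ) (hy : 0 < y) :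
    HasDerivAt (rpowDefect ν)
      (ν / 2 * y ^ (-(ν / 2) - 1) * ((y - 1) * (1 + y) ^ (ν - 1) + 1 - y ^ ν)) y := by
  have h1y : 0 < 1 + y := by linarith
  have hsum : HasDerivAt (fun y : ℝ => (1 + y) ^ ν) (ν * (1 + y) ^ (ν - 1)) y := by
    simpa using ((hasDerivAt_id y).const_add 1).rpow_const (p := ν) (Or.inl h1y.ne')
  have hpow := hasDerivAt_rpow_const (x := y) (p := ν) (Or.inl hy.ne')
  have hneg := hasDerivAt_rpow_const (x := y) (p := -(ν / 2)) (Or.inl hy.ne')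
  refine (((hsum.sub hpow).sub_const 1).mul hneg).congr_deriv ?_
  simp only [Pi.sub_apply]
  rw [rpow_sub_one hy.ne', rpow_sub_one hy.ne', rpow_sub_one h1y.ne']
  field_simp
  ring

lemma continuousOn_rpowDefect (ν : ℝ) : ContinuousOn (rpowDefect ν) (Ioi 0) :=
  fun _ hy => (hasDerivAt_rpowDefect ν hy).continuousAt.continuousWithinAt

lemma monotoneOn_rpowDefect (hν0 : 0 ≤ ν) (hν1 : ν ≤ 1) : MonotoneOn (rpowDefect ν) (Ici 1) := by
  refine monotoneOn_of_hasDerivWithinAt_nonneg (convex_Ici 1)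
    ((continuousOn_rpowDefect ν).mono fun _ hy => mem_Ioi.2 (zero_lt_one.trans_le hy))
    (fun y hy => (hasDerivAt_rpowDefect ν ?_).hasDerivWithinAt) fun y hy => ?_ <;>
    rw [interior_Ici, mem_Ioi] at hy
  · linarith
  · have hsign := rpow_sub_one_le_mul_one_add_rpow hν0 hν1 hy.le
    have hpos := rpow_pos_of_pos (zero_lt_one.trans hy) (-(ν / 2) - 1)
    exact mul_nonneg (mul_nonneg (by linarith) hpos.le) (by linarith)

lemma antitoneOn_rpowDefect (hν1 : 1 ≤ ν) (hν2 : ν ≤ 2) : AntitoneOn (rpowDefect ν) (Ici 1) := by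
  refine antitoneOn_of_hasDerivWithinAt_nonpos (convex_Ici 1)
    ((continuousOn_rpowDefect ν).mono fun _ hy => mem_Ioi.2 (zero_lt_one.trans_le hy))
    (fun y hy => (hasDerivAt_rpowDefect ν ?_).hasDerivWithinAt) fun y hy => ?_ <;>
    rw [interior_Ici, mem_Ioi] at hy
  · linarith
  · have hsign := mul_one_add_rpow_sub_one_le hν1 hν2 hy.le
    have hpos := rpow_pos_of_pos (zero_lt_one.trans hy) (-(ν / 2) - 1)
    exact mul_nonpos_of_nonneg_of_nonpos (mul_nonneg (by linarith) hpos.le) (by linarith)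

lemma rpowDefect_sq_le (hν0 : 0 ≤ ν) (hν2 : ν ≤ 2) (hy : 1 ≤ y) :
    rpowDefect ν y ^ 2 ≤ (2 ^ ν - 2) ^ 2 := by
  have hy0 : 0 < y := by linarith
  have hneg : 0 ≤ y ^ (-(ν / 2)) := rpow_nonneg hy0.le _
  rcases le_total ν 1 with hν1 | hν1
  · have hlo : 2 ^ ν - 2 ≤ rpowDefect ν y := by
      rw [← rpowDefect_one]; exact monotoneOn_rpowDefect hν0 hν1 self_mem_Ici hy hy
    have hhi : rpowDefect ν y ≤ 0 := by
      have := rpow_add_le_add_rpow zero_le_one hy0.le hν0 hν1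
      rw [one_rpow] at this
      exact mul_nonpos_of_nonpos_of_nonneg (by linarith) hneg
    nlinarith
  · have hhi : rpowDefect ν y ≤ 2 ^ ν - 2 := by
      rw [← rpowDefect_one]; exact antitoneOn_rpowDefect hν1 hν2 self_mem_Ici hy hy
    have hlo : 0 ≤ rpowDefect ν y := by
      have := add_rpow_le_rpow_add zero_le_one hy0.le hν1
      rw [one_rpow] at this
      exact mul_nonneg (by linarith) hneg
    nlinarith

lemma rpow_add_sub_rpow_sub_rpow_eq_rpowDefect_mul {u v : ℝ} (hu : 0 < u) (hv : 0 < v) :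
    (u + v) ^ ν - u ^ ν - v ^ ν = rpowDefect ν (u / v) * (u * v) ^ (ν / 2) := by
  have hv2 : v ^ (ν / 2) * v ^ (ν / 2) = v ^ ν := by rw [← rpow_add hv, add_halves]
  rw [rpowDefect, rpow_neg (div_nonneg hu.le hv.le), div_rpow hu.le hv.le, div_rpow hu.le hv.le,
    mul_rpow hu.le hv.le, show 1 + u / v = (u + v) / v by field_simp; ring,
    div_rpow (by positivity) hv.le, ← hv2]
  field_simp

lemma sq_rpow_add_sub_rpow_sub_rpow_le (hν0 : 0 ≤ ν) (hν2 : ν ≤ 2) {u v : ℝ}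
    (hu : 0 < u) (hv : 0 < v) :
    ((u + v) ^ ν - u ^ ν - v ^ ν) ^ 2 ≤ (2 ^ ν - 2) ^ 2 * (u ^ ν * v ^ ν) := by
  wlog hvu : v ≤ u generalizing u v
  · have := this hv hu (le_of_not_ge hvu)
    rw [add_comm v u, mul_comm (v ^ ν)] at this
    linarith
  have hsq : ((u * v) ^ (ν / 2)) ^ 2 = u ^ ν * v ^ ν := by
    rw [← rpow_natCast, ← rpow_mul (by positivity), mul_rpow hu.le hv.le]; norm_num
  rw [rpow_add_sub_rpow_sub_rpow_eq_rpowDefect_mul hu hv, mul_pow, hsq]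
  exact mul_le_mul_of_nonneg_right (rpowDefect_sq_le hν0 hν2 ((one_le_div hv).2 hvu))
    (by positivity)

end Defect

section FractionalBrownianMotion

variable {H s t : ℝ}

noncomputable def fbmKappa (H : ℝ) : ℝ := 2 ^ (2 * H) * (4 - 2 ^ (2 * H)) / 4

lemma fbmKappa_pos (hH1 : H < 1) : 0 < fbmKappa H := by
  have hlt : (2 : ℝ) ^ (2 * H) < 2 ^ (2 : ℝ) :=
    rpow_lt_rpow_of_exponent_lt one_lt_two (by linarith)
  rw [rpow_two] at hlt
  exact div_pos (mul_pos (rpow_pos_of_pos two_pos _) (by linarith)) four_pos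

lemma inv_fbmKappa : (fbmKappa H)⁻¹ = 2 ^ (2 - 2 * H) / (4 - 2 ^ (2 * H)) := by
  rw [fbmKappa, rpow_sub two_pos, rpow_two]
  field_simp
  norm_num

lemma fbmA_comm (H s t : ℝ) : fbmA H s t = fbmA H t s := by
  rw [fbmA, fbmA, abs_sub_comm]
  ring

lemma fbmTheta_eq_mul_fbmA (H : ℝ) (hst : s ≠ t) :
    fbmTheta H s t = |t - s| ^ (2 * H) * fbmA H s t := by
  have : |t - s| ^ (2 * H) ≠ 0 := (rpow_pos_of_pos (abs_sub_pos.2 hst.symm) _).ne'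
  rw [fbmTheta, fbmR, fbmA]
  field_simp
  ring

lemma fbmKappa_mul_le_fbmTheta_of_lt (hH0 : 0 ≤ H) (hH1 : H ≤ 1) (hs : 0 < s) (hst : s < t) :
    fbmKappa H * (s ^ (2 * H) * (t - s) ^ (2 * H)) ≤ fbmTheta H s t := by
  have hd : 0 < t - s := sub_pos.2 hst
  have hX := sq_rpow_add_sub_rpow_sub_rpow_le (ν := 2 * H) (by linarith) (by linarith) hs hd
  rw [add_sub_cancel] at hX
  have hΘ : fbmTheta H s t = s ^ (2 * H) * (t - s) ^ (2 * H)
      - (t ^ (2 * H) - s ^ (2 * H) - (t - s) ^ (2 * H)) ^ 2 / 4 := by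
    rw [fbmTheta, fbmR, abs_of_pos hd]; ring
  rw [hΘ, fbmKappa]
  linear_combination (1 / 4) * hX

lemma fbmKappa_mul_min_le_fbmA (hH0 : 0 ≤ H) (hH1 : H ≤ 1) (hs : 0 < s) (ht : 0 < t)
    (hst : s ≠ t) : fbmKappa H * min (s ^ (2 * H)) (t ^ (2 * H)) ≤ fbmA H s t := by
  wlog hlt : s < t generalizing s t
  · rw [min_comm, fbmA_comm]
    exact this ht hs hst.symm (lt_of_le_of_ne (not_lt.1 hlt) hst.symm)
  have hd : 0 < (t - s) ^ (2 * H) := rpow_pos_of_pos (sub_pos.2 hlt) _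
  have hΘ := fbmKappa_mul_le_fbmTheta_of_lt hH0 hH1 hs hlt
  rw [fbmTheta_eq_mul_fbmA H hst, abs_of_pos (sub_pos.2 hlt)] at hΘ
  rw [min_eq_left (rpow_le_rpow hs.le hlt.le (by linarith))]
  exact le_of_mul_le_mul_left (by linarith) hd

lemma min_rpow_div_abs_fbmA_le (hH0 : 0 ≤ H) (hH1 : H < 1) (hs : 0 < s) (ht : 0 < t)
    (hst : s ≠ t) :
    min (s ^ (2 * H)) (t ^ (2 * H)) / |fbmA H s t| ≤ 2 ^ (2 - 2 * H) / (4 - 2 ^ (2 * H)) := by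
  have hκ := fbmKappa_pos hH1
  have hA := fbmKappa_mul_min_le_fbmA hH0 hH1.le hs ht hst
  have hApos : 0 < fbmA H s t :=
    lt_of_lt_of_le (mul_pos hκ (lt_min (rpow_pos_of_pos hs _) (rpow_pos_of_pos ht _))) hA
  rw [abs_of_pos hApos, ← inv_fbmKappa, div_le_iff₀ hApos, le_inv_mul_iff₀ hκ]
  exact hA

lemma rpow_two_mul_sq {x : ℝ} (hx : 0 ≤ x) (H : ℝ) : (x ^ (2 * H)) ^ 2 = x ^ (4 * H) := by
  rw [← rpow_natCast, ← rpow_mul hx]; ring_nf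

lemma min_sq_of_nonneg {a b : ℝ} (ha : 0 ≤ a) (hb : 0 ≤ b) : min a b ^ 2 = min (a ^ 2) (b ^ 2) := by
  rcases le_total a b with h | h
  · rw [min_eq_left h, min_eq_left (pow_le_pow_left₀ ha h 2)]
  · rw [min_eq_right h, min_eq_right (pow_le_pow_left₀ hb h 2)]

lemma one_div_fbmTheta_sq_le (hH0 : 0 ≤ H) (hH1 : H < 1) (hs : 0 < s) (ht : 0 < t) (hst : s ≠ t) :
    1 / fbmTheta H s t ^ 2
      ≤ (fbmKappa H)⁻¹ ^ 2 / (|t - s| ^ (4 * H) * min (s ^ (4 * H)) (t ^ (4 * H))) := by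
  set P := |t - s| ^ (2 * H) * min (s ^ (2 * H)) (t ^ (2 * H))
  have hκ := fbmKappa_pos hH1
  have hP : 0 < P := mul_pos (rpow_pos_of_pos (abs_sub_pos.2 hst.symm) _)
    (lt_min (rpow_pos_of_pos hs _) (rpow_pos_of_pos ht _))
  have hΘ : fbmKappa H * P ≤ fbmTheta H s t := by
    rw [fbmTheta_eq_mul_fbmA H hst, mul_left_comm]
    exact mul_le_mul_of_nonneg_left (fbmKappa_mul_min_le_fbmA hH0 hH1.le hs ht hst)
      (rpow_nonneg (abs_nonneg _) _)
  have hP2 : P ^ 2 = |t - s| ^ (4 * H) * min (s ^ (4 * H)) (t ^ (4 * H)) := by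
    rw [mul_pow, min_sq_of_nonneg (rpow_nonneg hs.le _) (rpow_nonneg ht.le _),
      rpow_two_mul_sq (abs_nonneg _), rpow_two_mul_sq hs.le, rpow_two_mul_sq ht.le]
  calc 1 / fbmTheta H s t ^ 2 ≤ 1 / (fbmKappa H * P) ^ 2 :=
        one_div_le_one_div_of_le (by positivity) (pow_le_pow_left₀ (by positivity) hΘ 2)
    _ = (fbmKappa H)⁻¹ ^ 2 / P ^ 2 := by field_simp
    _ = _ := by rw [hP2]

end FractionalBrownianMotion

/-- For `H ∈ (0,1)` and all `s,t > 0`, `s ≠ t`: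
(i) `Θ_{s,t} = |t−s|^{2H} A(s,t)`;
(ii) `(s^{2H} ∧ t^{2H})/|A(s,t)| ≤ 2^{2−2H}/(4 − 2^{2H})`;
(iii) there is `C_H` with `1/Θ²_{s,t} ≤ C_H/(|t−s|^{4H}(s^{4H} ∧ t^{4H}))`. -/
theorem statement7 (H : ℝ) (hH : H ∈ Set.Ioo (0:ℝ) 1) :
    (∀ s t : ℝ, 0 < s → 0 < t → s ≠ t →
      fbmTheta H s t = |t - s| ^ (2*H) * fbmA H s t ∧
      min (s ^ (2*H)) (t ^ (2*H)) / |fbmA H s t| ≤ (2:ℝ) ^ (2-2*H) / (4 - (2:ℝ) ^ (2*H))) ∧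
    ∃ C : ℝ, 0 < C ∧ ∀ s t : ℝ, 0 < s → 0 < t → s ≠ t →
      1 / (fbmTheta H s t)^2 ≤ C / (|t - s| ^ (4*H) * min (s ^ (4*H)) (t ^ (4*H))) := by
  obtain ⟨hH0, hH1⟩ := hH
  refine ⟨fun s t hs ht hst => ⟨fbmTheta_eq_mul_fbmA H hst,
      min_rpow_div_abs_fbmA_le hH0.le hH1 hs ht hst⟩,
    (fbmKappa H)⁻¹ ^ 2, by have := fbmKappa_pos hH1; positivity,
    fun s t hs ht hst => one_div_fbmTheta_sq_le hH0.le hH1 hs ht hst⟩
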